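/- Let c ∈ ℝ^d have three special coordinates with values at least (1/2)a_1√(log n), (1/2)b√(log n), and exactly c√(log n), and all remaining coordinates bounded by (t/n)b√(log n) in absolute value, where a_1 + b ≥ 0.4 and t√d = o(n^{0.99}). Let σ ∈ {−1,+1}^d be uniform random signs. Then Pr[⟨c, σ⟩ ≥ (c+0.1)√(log n)] ≥ 1/10 for sufficiently large n. -/

import Mathlib

/-!
Condition on the three special signs being `+1` (probability `1/8`). On that event the special
coordinates contribute at least `(c + 0.2)√(log n)`, using `a₁ + b ≥ 0.4`. The remaining sum has
second moment `∑ vᵢ² ≤ d (t b / n)² log n = o(log n)`, so by Chebyshev it drops below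
`-0.1√(log n)` with probability at most `1/40`. Hence the success probability is at least
`1/8 - 1/40 = 1/10`.
-/

open Finset Filter

noncomputable def boolSign (x : Bool) : ℝ := if x then 1 else -1

@[simp] lemma boolSign_true : boolSign true = 1 := rfl

@[simp] lemma boolSign_not (x : Bool) : boolSign (!x) = -boolSign x := by
  cases x <;> simp [boolSign]

@[simp] lemma boolSign_mul_self (x : Bool) : boolSign x * boolSign x = 1 := by
  cases x <;> simp [boolSign]

lemma card_filter_le_abs_mul_sq_le_sum_sq {α : Type*} [Fintype α] {θ : ℝ} (hθ : 0 < θ)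
    (X : α → ℝ) : #{a | θ ≤ |X a|} * θ ^ 2 ≤ ∑ a, X a ^ 2 := by
  calc (#{a | θ ≤ |X a|} : ℝ) * θ ^ 2 = #{a | θ ≤ |X a|} • θ ^ 2 := (nsmul_eq_mul _ _).symm
    _ ≤ ∑ a ∈ {a | θ ≤ |X a|}, X a ^ 2 := by
        refine card_nsmul_le_sum _ _ _ fun a ha => ?_
        rw [← sq_abs (X a)]
        exact pow_le_pow_left₀ hθ.le (mem_filter.mp ha).2 2
    _ ≤ ∑ a, X a ^ 2 :=
        sum_le_sum_of_subset_of_nonneg (subset_univ _) fun _ _ _ => sq_nonneg _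

lemma sum_sq_le_card_mul_sq_of_abs_le {ι : Type*} {T : Finset ι} {v : ι → ℝ} {M : ℝ}
    (h : ∀ i ∈ T, |v i| ≤ M) : ∑ i ∈ T, v i ^ 2 ≤ #T * M ^ 2 := by
  rw [← nsmul_eq_mul]
  refine sum_le_card_nsmul _ _ _ fun i hi => ?_
  obtain ⟨hlow, hupp⟩ := abs_le.mp (h i hi)
  exact sq_le_sq' hlow hupp

section SignVectors

variable {ι : Type*} [Fintype ι] [DecidableEq ι]

lemma sum_boolSign_mul_boolSign (i j : ι) :
    ∑ σ : ι → Bool, boolSign (σ i) * boolSign (σ j) =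
      if i = j then 2 ^ Fintype.card ι else 0 := by
  split_ifs with hij
  · subst hij
    simp
  · -- flipping `σ i` is a bijection that negates every summand
    have hflip : Function.Involutive fun σ : ι → Bool => Function.update σ i (!σ i) :=
      fun σ => by ext k; by_cases hk : k = i <;> simp [hk]
    have hneg := Fintype.sum_bijective _ hflip.bijective
      (fun σ => boolSign (σ i) * boolSign (σ j)) (fun σ => -(boolSign (σ i) * boolSign (σ j)))
      fun σ => by simp [Function.update_of_ne (Ne.symm hij)]
    rw [sum_neg_distrib] at hneg
    linarith

lemma sum_sq_sum_mul_boolSign (T : Finset ι) (w : ι → ℝ) :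
    ∑ σ : ι → Bool, (∑ i ∈ T, w i * boolSign (σ i)) ^ 2 =
      2 ^ Fintype.card ι * ∑ i ∈ T, w i ^ 2 := by
  have hpair (i j : ι) : ∑ σ : ι → Bool, w i * boolSign (σ i) * (w j * boolSign (σ j)) =
      w i * w j * if i = j then 2 ^ Fintype.card ι else 0 := by
    rw [← sum_boolSign_mul_boolSign, mul_sum]
    exact sum_congr rfl fun _ _ => by ring
  simp_rw [sq, sum_mul_sum]
  rw [sum_comm]
  simp_rw [sum_comm (s := (univ : Finset (ι → Bool))) (t := T), hpair, mul_ite, mul_zero,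
    sum_ite_eq, mul_sum]
  exact sum_congr rfl fun i hi => by rw [if_pos hi]; ring

lemma card_filter_forall_mem_eq_true_mul (S : Finset ι) :
    #{σ : ι → Bool | ∀ i ∈ S, σ i = true} * 2 ^ #S = 2 ^ Fintype.card ι := by
  have hpi : ({σ : ι → Bool | ∀ i ∈ S, σ i = true} : Finset _) =
      Fintype.piFinset fun i => if i ∈ S then {true} else univ := by
    ext σ
    simp only [mem_filter, mem_univ, true_and, Fintype.mem_piFinset]
    refine forall_congr' fun i => ?_
    split_ifs with hi <;> simp [hi]
  rw [hpi, Fintype.card_piFinset]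
  simp only [apply_ite card, card_singleton, card_univ, Fintype.card_bool, prod_ite,
    prod_const_one, prod_const, one_mul]
  rw [← pow_add, filter_notMem_eq_sdiff, ← compl_eq_univ_sdiff, S.card_compl_add_card]

/-- Setting `σ ≡ true` on `S` succeeds unless the sum over `Sᶜ` deviates by `θ`. -/
lemma le_card_filter_le_sum_mul_boolSign (S : Finset ι) (v : ι → ℝ) {τ θ : ℝ} (hθ : 0 < θ)
    (hS : τ + θ ≤ ∑ i ∈ S, v i) :
    2 ^ Fintype.card ι * (1 / 2 ^ #S - (∑ i ∈ Sᶜ, v i ^ 2) / θ ^ 2) ≤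
      #{σ : ι → Bool | τ ≤ ∑ i, v i * boolSign (σ i)} := by
  set N := Fintype.card ι
  set X : (ι → Bool) → ℝ := fun σ => ∑ i ∈ Sᶜ, v i * boolSign (σ i)
  set A : Finset (ι → Bool) := {σ | ∀ i ∈ S, σ i = true}
  set G : Finset (ι → Bool) := {σ | τ ≤ ∑ i, v i * boolSign (σ i)}
  set B : Finset (ι → Bool) := {σ | θ ≤ |X σ|}
  have hAGB : A ⊆ G ∪ B := by
    intro σ hσ
    simp only [A, mem_filter, mem_univ, true_and] at hσ
    simp only [G, B, mem_union, mem_filter, mem_univ, true_and, or_iff_not_imp_right, not_le]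
    intro hX
    rw [← S.sum_add_sum_compl, sum_congr rfl fun i hi => by rw [hσ i hi, boolSign_true, mul_one]]
    linarith [(abs_lt.mp hX).1]
  have hA : (2 : ℝ) ^ N / 2 ^ #S = #A := by
    rw [div_eq_iff (by positivity)]
    exact_mod_cast (card_filter_forall_mem_eq_true_mul S).symm
  have hB : (#B : ℝ) ≤ 2 ^ N * (∑ i ∈ Sᶜ, v i ^ 2) / θ ^ 2 := by
    rw [le_div_iff₀ (by positivity), ← sum_sq_sum_mul_boolSign]
    exact card_filter_le_abs_mul_sq_le_sum_sq hθ X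
  have hcard : (#A : ℝ) ≤ #G + #B := by
    exact_mod_cast (card_le_card hAGB).trans (card_union_le _ _)
  calc _ = (2 : ℝ) ^ N / 2 ^ #S - 2 ^ N * (∑ i ∈ Sᶜ, v i ^ 2) / θ ^ 2 := by ring
    _ ≤ #G := by linarith

lemma one_div_ten_le_card_filter_le_sum_mul_boolSign {S : Finset ι} (hS3 : #S = 3) (v : ι → ℝ)
    {τ θ : ℝ} (hθ : 0 < θ) (hS : τ + θ ≤ ∑ i ∈ S, v i) (hres : ∑ i ∈ Sᶜ, v i ^ 2 ≤ θ ^ 2 / 40) :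
    1 / 10 ≤ (#{σ : ι → Bool | τ ≤ ∑ i, v i * boolSign (σ i)} : ℝ) / 2 ^ Fintype.card ι := by
  have key := le_card_filter_le_sum_mul_boolSign S v hθ hS
  rw [hS3] at key
  have hratio : (∑ i ∈ Sᶜ, v i ^ 2) / θ ^ 2 ≤ 1 / 40 := by
    rw [div_le_iff₀ (by positivity)]
    linarith
  rw [le_div_iff₀ (by positivity)]
  nlinarith [pow_pos (two_pos : (0 : ℝ) < 2) (Fintype.card ι)]

end SignVectors

lemma eventually_mul_div_mul_sq_le {s m : ℕ → ℕ} {p : ℝ} (hp : p ≤ 1)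
    (h : (fun n : ℕ => (s n : ℝ) * √(m n)) =o[atTop] fun n : ℕ => (n : ℝ) ^ p) (b : ℝ)
    {ε : ℝ} (hε : 0 < ε) :
    ∀ᶠ n : ℕ in atTop, (m n : ℝ) * ((s n : ℝ) / n * b) ^ 2 ≤ ε ^ 2 := by
  filter_upwards [(h.const_mul_left b).def hε, eventually_ge_atTop 1] with n hn hn1
  have hn1 : (1 : ℝ) ≤ n := by exact_mod_cast hn1
  rw [Real.norm_eq_abs, Real.norm_of_nonneg (by positivity)] at hn
  have hbound : |b * (s n * √(m n))| ≤ ε * n :=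
    hn.trans (mul_le_mul_of_nonneg_left (Real.rpow_le_self_of_one_le hn1 hp) hε.le)
  have hsq : (m n : ℝ) * ((s n : ℝ) / n * b) ^ 2 = (b * (s n * √(m n)) / n) ^ 2 := by
    rw [div_pow, mul_pow, mul_pow, mul_pow, Real.sq_sqrt (Nat.cast_nonneg _)]
    ring
  rw [hsq, sq_le_sq, abs_of_pos hε, abs_div, abs_of_pos (by positivity : (0 : ℝ) < n),
    div_le_iff₀ (by positivity)]
  exact hbound

theorem stmt_13_general (t d : ℕ → ℕ)
    (hlo : (fun n : ℕ => (t n : ℝ) * Real.sqrt (d n)) =o[Filter.atTop]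
      (fun n : ℕ => (n : ℝ) ^ (0.99 : ℝ)))
    (a₁ b c : ℝ) (hab : 0.4 ≤ a₁ + b) :
    ∃ N : ℕ, ∀ n ≥ N,
      ∀ (v : Fin (d n) → ℝ) (i₁ i₂ i₃ : Fin (d n)),
        i₁ ≠ i₂ → i₁ ≠ i₃ → i₂ ≠ i₃ →
        (1/2) * a₁ * Real.sqrt (Real.log n) ≤ v i₁ →
        (1/2) * b * Real.sqrt (Real.log n) ≤ v i₂ →
        v i₃ = c * Real.sqrt (Real.log n) →
        (∀ i, i ≠ i₁ → i ≠ i₂ → i ≠ i₃ →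
          |v i| ≤ ((t n : ℝ) / n) * b * Real.sqrt (Real.log n)) →
        (1 : ℝ) / 10 ≤
          ((Finset.univ.filter (fun σ : Fin (d n) → Bool =>
              (c + 0.1) * Real.sqrt (Real.log n) ≤
                ∑ i, v i * (if σ i then (1:ℝ) else -1))).card : ℝ) / 2 ^ (d n) := by
  obtain ⟨N, hN⟩ := eventually_atTop.mp <| (eventually_ge_atTop 2).and <|
    eventually_mul_div_mul_sq_le (by norm_num) hlo b (ε := 1 / 64) (by norm_num)
  refine ⟨N, fun n hn v i₁ i₂ i₃ h12 h13 h23 hv₁ hv₂ hv₃ hrest => ?_⟩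
  obtain ⟨hn2, hsmall⟩ := hN n hn
  set L := √(Real.log n)
  have hL : 0 < L := Real.sqrt_pos.2 (Real.log_pos (by exact_mod_cast hn2))
  set S : Finset (Fin (d n)) := {i₁, i₂, i₃}
  have hS : (c + 0.1) * L + L / 10 ≤ ∑ i ∈ S, v i := by
    rw [sum_insert (by simp [h12, h13]), sum_pair h23]
    linarith [mul_le_mul_of_nonneg_left hab hL.le]
  have hres : ∑ i ∈ Sᶜ, v i ^ 2 ≤ (L / 10) ^ 2 / 40 := calc
    _ ≤ #Sᶜ * ((t n : ℝ) / n * b * L) ^ 2 := by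
        refine sum_sq_le_card_mul_sq_of_abs_le fun i hi => ?_
        simp only [S, mem_compl, mem_insert, mem_singleton, not_or] at hi
        exact hrest i hi.1 hi.2.1 hi.2.2
    _ ≤ (d n : ℝ) * ((t n : ℝ) / n * b) ^ 2 * L ^ 2 := by
        rw [mul_pow, ← mul_assoc]
        gcongr
        exact_mod_cast (card_le_univ _).trans_eq (Fintype.card_fin _)
    _ ≤ (L / 10) ^ 2 / 40 := by nlinarith [sq_nonneg L]
  have hS3 : #S = 3 := by rw [card_insert_of_notMem (by simp [h12, h13]), card_pair h23]
  have hprob := one_div_ten_le_card_filter_le_sum_mul_boolSign hS3 v (by positivity) hS hres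
  rwa [Fintype.card_fin] at hprob

theorem stmt_13 (t d : ℕ → ℕ)
    (hlo : (fun n : ℕ => (t n : ℝ) * Real.sqrt (d n)) =o[Filter.atTop]
      (fun n : ℕ => (n : ℝ) ^ (0.99 : ℝ)))
    (a₁ b c : ℝ) (ha : 0 < a₁) (hb : 0 < b) (hc : 0 < c) (hab : 0.4 ≤ a₁ + b) :
    ∃ N : ℕ, ∀ n ≥ N,
      ∀ (v : Fin (d n) → ℝ) (i₁ i₂ i₃ : Fin (d n)),
        i₁ ≠ i₂ → i₁ ≠ i₃ → i₂ ≠ i₃ →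
        (1/2) * a₁ * Real.sqrt (Real.log n) ≤ v i₁ →
        (1/2) * b * Real.sqrt (Real.log n) ≤ v i₂ →
        v i₃ = c * Real.sqrt (Real.log n) →
        (∀ i, i ≠ i₁ → i ≠ i₂ → i ≠ i₃ →
          |v i| ≤ ((t n : ℝ) / n) * b * Real.sqrt (Real.log n)) →
        (1 : ℝ) / 10 ≤
          ((Finset.univ.filter (fun σ : Fin (d n) → Bool =>
              (c + 0.1) * Real.sqrt (Real.log n) ≤
                ∑ i, v i * (if σ i then (1:ℝ) else -1))).card : ℝ) / 2 ^ (d n) :=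
  stmt_13_general t d hlo a₁ b c hab
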